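/- For every 2 ≤ i ≤ n: (a) there is a well-defined group homomorphism ε_i : J_n → D_n^i ⋊ S_n determined on generators by s_{p,q} ↦ (1, 1) if q−p+1 < i, s_{p,q} ↦ (τ_{[p,q]}, w_{p,q}) if q−p+1 = i, and s_{p,q} ↦ (1, w_{p,q}) if q−p+1 > i; (b) the group homomorphism J_n^{i,i} → D_n^i ⋊ S_n determined on generators by s_{p,q} ↦ (τ_{[p,q]}, w_{p,q}) is injective. -/

import Mathlib

/-- The set of intervals `[p,q]`, `1 ≤ p < q ≤ n`, indexing the generators `s_{p,q}`
of the cactus group `J_n`. -/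
def cactusSet (n : ℕ) : Set (ℕ × ℕ) := {pq | 1 ≤ pq.1 ∧ pq.1 < pq.2 ∧ pq.2 ≤ n}

/-- The defining relations (j1)-(j3) of the cactus group, restricted to a collection `C`
of generating intervals: exactly those cactus relations involving only generators from `C`. -/
def cactusRels (C : Set (ℕ × ℕ)) : Set (FreeGroup C) :=
  {w | (∃ a : C, w = FreeGroup.of a * FreeGroup.of a) ∨
    (∃ a b : C, (a.1.2 < b.1.1 ∨ b.1.2 < a.1.1) ∧
      w = FreeGroup.of a * FreeGroup.of b * (FreeGroup.of a)⁻¹ * (FreeGroup.of b)⁻¹) ∨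
    (∃ a b c : C, a.1.1 ≤ b.1.1 ∧ b.1.2 ≤ a.1.2 ∧
      c.1.1 = a.1.1 + a.1.2 - b.1.2 ∧ c.1.2 = a.1.1 + a.1.2 - b.1.1 ∧
      w = FreeGroup.of a * FreeGroup.of b * (FreeGroup.of a)⁻¹ * (FreeGroup.of c)⁻¹)}

/-- The group presented by the generators `s_I`, `I ∈ C`, and those cactus relations
involving only these generators. -/
abbrev PartialCactusGroup (C : Set (ℕ × ℕ)) := PresentedGroup (cactusRels C)

/-- The cactus group `J_n`. -/
abbrev CactusGroup (n : ℕ) := PartialCactusGroup (cactusSet n)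

/-- The involution of `{0,…,n-1}` underlying the permutation `w_{p,q}` (in `1`-based labelling:
the point `i` corresponds to the label `i+1 ∈ {1,…,n}`): it sends a label `i` with `p ≤ i ≤ q`
to `p + q - i` and fixes all other labels. -/
def wFun (n p q : ℕ) (i : Fin n) : Fin n :=
  if h : 1 ≤ p ∧ p ≤ (i : ℕ) + 1 ∧ (i : ℕ) + 1 ≤ q ∧ q ≤ n then
    ⟨p + q - ((i : ℕ) + 1) - 1, by omega⟩
  else i

lemma wFun_involutive (n p q : ℕ) : Function.Involutive (wFun n p q) := by
  intro i
  unfold wFun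
  by_cases h : 1 ≤ p ∧ p ≤ (i : ℕ) + 1 ∧ (i : ℕ) + 1 ≤ q ∧ q ≤ n
  · rw [dif_pos h, dif_pos (by simp only [Fin.val_mk]; omega)]
    apply Fin.ext
    simp only [Fin.val_mk]
    omega
  · rw [dif_neg h, dif_neg h]

/-- The permutation `w_{p,q}` of `{1,…,n}` (coded on `Fin n` via `i ↦ i+1`), sending `i` to
`p+q-i` for `p ≤ i ≤ q` and fixing all other points. -/
def wPerm (n p q : ℕ) : Equiv.Perm (Fin n) :=
  Function.Involutive.toPerm (wFun n p q) (wFun_involutive n p q)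

/-- The subset `{p, p+1, …, q}` of `{1,…,n}`, coded inside `Fin n` via `i ↦ i+1`. -/
def intervalFinset (n p q : ℕ) : Finset (Fin n) :=
  Finset.univ.filter (fun i => p ≤ (i : ℕ) + 1 ∧ (i : ℕ) + 1 ≤ q)

lemma two_le_intervalFinset_card {n p q : ℕ} (h : (p, q) ∈ cactusSet n) :
    2 ≤ (intervalFinset n p q).card := by
  obtain ⟨h1, h2, h3⟩ := h
  have hp : (⟨p - 1, by omega⟩ : Fin n) ∈ intervalFinset n p q := by
    simp only [intervalFinset, Finset.mem_filter, Finset.mem_univ, true_and]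
    omega
  have hq : (⟨q - 1, by omega⟩ : Fin n) ∈ intervalFinset n p q := by
    simp only [intervalFinset, Finset.mem_filter, Finset.mem_univ, true_and]
    omega
  have := Finset.one_lt_card.mpr ⟨_, hp, _, hq, by simp only [ne_eq, Fin.mk.injEq]; omega⟩
  omega

lemma intervalFinset_card {n p q : ℕ} (h1 : 1 ≤ p) (h3 : q ≤ n) :
    (intervalFinset n p q).card = q + 1 - p := by
  have himg : (intervalFinset n p q).image Fin.val = Finset.Ico (p - 1) q := by
    ext x
    simp only [intervalFinset, Finset.mem_image, Finset.mem_filter, Finset.mem_univ, true_and,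
      Finset.mem_Ico]
    constructor
    · rintro ⟨i, hi, rfl⟩
      omega
    · rintro ⟨hx1, hx2⟩
      exact ⟨⟨x, by omega⟩, by simp only [Fin.val_mk]; omega, rfl⟩
  have hcard : (intervalFinset n p q).card = (Finset.Ico (p - 1) q).card := by
    rw [← himg, Finset.card_image_of_injective _ Fin.val_injective]
  rw [hcard, Nat.card_Ico]
  omega

/-- The generating intervals of `J_n^{i,j}`: those `[p,q]` whose leaf number `q-p+1`
lies between `i` and `j`. -/
def sliceSet (n i j : ℕ) : Set (ℕ × ℕ) :=
  {pq | pq ∈ cactusSet n ∧ i ≤ pq.2 - pq.1 + 1 ∧ pq.2 - pq.1 + 1 ≤ j}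

/-- The group `J_n^{i,j}`, presented by the generators `s_{p,q}` with `i ≤ q-p+1 ≤ j` and those
cactus relations involving only such generators. -/
abbrev SliceCactusGroup (n i j : ℕ) := PartialCactusGroup (sliceSet n i j)

/-- Generators of the width-`i` Gauss diagram group `D_n^i`: `i`-element subsets of `{1,…,n}`. -/
abbrev GaussIGen (n i : ℕ) := {I : Finset (Fin n) // I.card = i}

/-- The defining relations of the width-`i` Gauss diagram group `D_n^i`. -/
def gaussIRels (n i : ℕ) : Set (FreeGroup (GaussIGen n i)) :=
  {w | (∃ a : GaussIGen n i, w = FreeGroup.of a * FreeGroup.of a) ∨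
    (∃ a b : GaussIGen n i, Disjoint a.1 b.1 ∧
      w = FreeGroup.of a * FreeGroup.of b * (FreeGroup.of a)⁻¹ * (FreeGroup.of b)⁻¹)}

/-- The width-`i` Gauss diagram group `D_n^i`. -/
abbrev GaussIGroup (n i : ℕ) := PresentedGroup (gaussIRels n i)

lemma gaussIRel_one {n i : ℕ} {r : FreeGroup (GaussIGen n i)} (h : r ∈ gaussIRels n i) :
    PresentedGroup.mk (gaussIRels n i) r = 1 :=
  (QuotientGroup.eq_one_iff _).mpr (Subgroup.subset_normalClosure h)

/-- The action of a permutation on the generators of `D_n^i`: `σ • τ_I = τ_{σ(I)}`. -/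
def permGenI (n i : ℕ) (σ : Equiv.Perm (Fin n)) (a : GaussIGen n i) : GaussIGen n i :=
  ⟨a.1.image σ, by rw [Finset.card_image_of_injective _ σ.injective]; exact a.2⟩

lemma permGenI_rels (n i : ℕ) (σ : Equiv.Perm (Fin n)) : ∀ r ∈ gaussIRels n i,
    FreeGroup.lift (fun a => (PresentedGroup.of (rels := gaussIRels n i) (permGenI n i σ a))) r
      = 1 := by
  rintro r (⟨a, rfl⟩ | ⟨a, b, hab, rfl⟩)
  · have h1 : (PresentedGroup.mk (gaussIRels n i))
        (FreeGroup.of (permGenI n i σ a) * FreeGroup.of (permGenI n i σ a)) = 1 :=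
      gaussIRel_one (Or.inl ⟨permGenI n i σ a, rfl⟩)
    rw [map_mul] at h1
    simp
    exact h1
  · have hab' : Disjoint (permGenI n i σ a).1 (permGenI n i σ b).1 :=
      (Finset.disjoint_image σ.injective).mpr hab
    have h1 : (PresentedGroup.mk (gaussIRels n i))
        (FreeGroup.of (permGenI n i σ a) * FreeGroup.of (permGenI n i σ b) *
          (FreeGroup.of (permGenI n i σ a))⁻¹ * (FreeGroup.of (permGenI n i σ b))⁻¹) = 1 :=
      gaussIRel_one (Or.inr ⟨permGenI n i σ a, permGenI n i σ b, hab', rfl⟩)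
    rw [map_mul, map_mul, map_mul, map_inv, map_inv] at h1
    simp
    exact h1

/-- The endomorphism of `D_n^i` induced by a permutation. -/
def permHomI (n i : ℕ) (σ : Equiv.Perm (Fin n)) : GaussIGroup n i →* GaussIGroup n i :=
  PresentedGroup.toGroup (permGenI_rels n i σ)

lemma permHomI_of (n i : ℕ) (σ : Equiv.Perm (Fin n)) (a : GaussIGen n i) :
    permHomI n i σ (PresentedGroup.of a) = PresentedGroup.of (permGenI n i σ a) :=
  PresentedGroup.toGroup.of _

lemma permHomI_comp (n i : ℕ) (σ τ : Equiv.Perm (Fin n)) :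
    (permHomI n i σ).comp (permHomI n i τ) = permHomI n i (σ * τ) := by
  ext x
  simp only [MonoidHom.comp_apply, permHomI_of]
  congr 1
  apply Subtype.ext
  simp only [permGenI, Finset.image_image]
  rfl

lemma permHomI_one (n i : ℕ) : permHomI n i 1 = MonoidHom.id (GaussIGroup n i) := by
  ext x
  simp only [MonoidHom.id_apply, permHomI_of]
  congr 1
  apply Subtype.ext
  simp [permGenI]

lemma permHomI_apply_apply (n i : ℕ) (σ τ : Equiv.Perm (Fin n)) (x : GaussIGroup n i) :
    permHomI n i σ (permHomI n i τ x) = permHomI n i (σ * τ) x :=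
  DFunLike.congr_fun (permHomI_comp n i σ τ) x

/-- The action of `S_n` on `D_n^i` by `σ • τ_I = τ_{σ(I)}`, as a homomorphism to automorphisms. -/
def permAutI (n i : ℕ) : Equiv.Perm (Fin n) →* MulAut (GaussIGroup n i) where
  toFun σ :=
    { toFun := permHomI n i σ
      invFun := permHomI n i σ⁻¹
      left_inv := fun x => by
        rw [permHomI_apply_apply, inv_mul_cancel, permHomI_one, MonoidHom.id_apply]
      right_inv := fun x => by
        rw [permHomI_apply_apply, mul_inv_cancel, permHomI_one, MonoidHom.id_apply]
      map_mul' := map_mul _ }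
  map_one' := by
    apply MulEquiv.ext
    intro x
    simp only [MulEquiv.coe_mk, Equiv.coe_fn_mk]
    rw [permHomI_one]
    rfl
  map_mul' := fun σ τ => by
    apply MulEquiv.ext
    intro x
    simp only [MulEquiv.coe_mk, Equiv.coe_fn_mk, MulAut.mul_apply]
    exact (permHomI_apply_apply n i σ τ x).symm


/-!
For (a), write the image of `s_{p,q}` as `(τ_{[p,q]}, w_{p,q})` when `q - p + 1 ≥ i`, reading
`τ_I` as `1` unless `|I| = i`. The cactus relations then reduce to the way `w_{p,q}` permutes
intervals: it fixes `[p,q]` and every interval disjoint from it, and reflects the subintervals.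

For (b), `D_n^i` is the right-angled Coxeter group of the Kneser graph, so by Tits' solution of the
word problem a word in its generators is trivial only if it can be erased by commuting adjacent
disjoint letters and deleting adjacent equal pairs. The `D_n^i`-component of the image of
`s_{a_1} ⋯ s_{a_k}` is the word `τ_{J_1} ⋯ τ_{J_k}` with `J_m = w_{a_1} ⋯ w_{a_{m-1}}(I_{a_m})`.
Since `w_a` preserves `I_a`, two consecutive letters of this word are disjoint (resp. equal)
exactly when the corresponding intervals are disjoint (resp. equal), and then the same move is a
cactus relation in `J_n^{i,i}`. So a word in the kernel is already trivial in `J_n^{i,i}`.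
-/

namespace RightAngledCoxeter

variable {α : Type*} (G : SimpleGraph α)

def rels : Set (FreeGroup α) :=
  {w | (∃ a, w = FreeGroup.of a * FreeGroup.of a) ∨
    (∃ a b, G.Adj a b ∧
      w = FreeGroup.of a * FreeGroup.of b * (FreeGroup.of a)⁻¹ * (FreeGroup.of b)⁻¹)}

inductive SwapStep : List α → List α → Prop
  | swap {a b : α} (l : List α) : G.Adj a b → SwapStep (a :: b :: l) (b :: a :: l)
  | cons (x : α) {l l' : List α} : SwapStep l l' → SwapStep (x :: l) (x :: l')

inductive Step : List α → List α → Prop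
  | swap {a b : α} (l : List α) : G.Adj a b → Step (a :: b :: l) (b :: a :: l)
  | cancel (a : α) (l : List α) : Step (a :: a :: l) l
  | cons (x : α) {l l' : List α} : Step l l' → Step (x :: l) (x :: l')

def SwapEquiv : List α → List α → Prop := Relation.ReflTransGen (SwapStep G)

def Reduces : List α → List α → Prop := Relation.ReflTransGen (Step G)

variable {G}

lemma SwapStep.symm {l l' : List α} (h : SwapStep G l l') : SwapStep G l' l := by
  induction h with
  | swap l hab => exact .swap l hab.symm
  | cons x _ ih => exact .cons x ih

lemma SwapEquiv.symm {l l' : List α} (h : SwapEquiv G l l') : SwapEquiv G l' l := by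
  induction h with
  | refl => exact .refl
  | tail _ hs ih => exact .head hs.symm ih

lemma SwapEquiv.cons (x : α) {l l' : List α} (h : SwapEquiv G l l') :
    SwapEquiv G (x :: l) (x :: l') := by
  induction h with
  | refl => exact .refl
  | tail _ hs ih => exact ih.tail (hs.cons x)

lemma SwapEquiv.eq_nil {l : List α} (h : SwapEquiv G l []) : l = [] := by
  cases h with
  | refl => rfl
  | tail _ hs => nomatch hs

lemma swapEquiv_cons_append {a : α} {l₁ : List α} (h : ∀ x ∈ l₁, G.Adj x a) (l₂ : List α) :
    SwapEquiv G (a :: (l₁ ++ l₂)) (l₁ ++ a :: l₂) := by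
  induction l₁ with
  | nil => exact .refl
  | cons x l₁ ih =>
    simp only [List.mem_cons, forall_eq_or_imp] at h
    exact .head (.swap _ h.1.symm) ((ih h.2).cons x)

lemma Reduces.cons (x : α) {l l' : List α} (h : Reduces G l l') :
    Reduces G (x :: l) (x :: l') := by
  induction h with
  | refl => exact .refl
  | tail _ hs ih => exact ih.tail (hs.cons x)

lemma reduces_cons_append {a : α} {l₁ : List α} (h : ∀ x ∈ l₁, G.Adj x a) (l₂ : List α) :
    Reduces G (a :: (l₁ ++ a :: l₂)) (l₁ ++ l₂) := by
  induction l₁ with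
  | nil => exact .single (.cancel a l₂)
  | cons x l₁ ih =>
    simp only [List.mem_cons, forall_eq_or_imp] at h
    exact .head (.swap _ h.1.symm) ((ih h.2).cons x)

variable (G) [DecidableEq α] [DecidableRel G.Adj]

/-- Deletes the leftmost `a` of the word that is preceded only by letters adjacent to `a`
(so that it can be commuted to the front); `none` if there is no such `a`. -/
def cancel (a : α) : List α → Option (List α)
  | [] => none
  | x :: t => if x = a then some t else if G.Adj x a then (cancel a t).map (x :: ·) else none

def Reduced : List α → Prop
  | [] => True
  | x :: t => cancel G x t = none ∧ Reduced t

def act (a : α) (w : List α) : List α := (cancel G a w).getD (a :: w)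

variable {G}

@[simp] lemma cancel_cons_self (a : α) (t : List α) : cancel G a (a :: t) = some t := by
  simp [cancel]

lemma cancel_cons_of_adj {a x : α} (h : G.Adj x a) (t : List α) :
    cancel G a (x :: t) = (cancel G a t).map (x :: ·) := by
  simp [cancel, h, h.ne]

lemma cancel_cons_of_not_adj {a x : α} (hxa : x ≠ a) (h : ¬ G.Adj x a) (t : List α) :
    cancel G a (x :: t) = none := by
  simp [cancel, h, hxa]

lemma exists_of_cancel_eq_some {a : α} {w u : List α} (h : cancel G a w = some u) :
    ∃ l₁ l₂, w = l₁ ++ a :: l₂ ∧ u = l₁ ++ l₂ ∧ ∀ x ∈ l₁, G.Adj x a := by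
  induction w generalizing u with
  | nil => simp [cancel] at h
  | cons x t ih =>
    by_cases hxa : x = a
    · subst hxa
      obtain rfl : t = u := by simpa using h
      exact ⟨[], t, rfl, rfl, by simp⟩
    by_cases hx : G.Adj x a
    · rw [cancel_cons_of_adj hx] at h
      obtain ⟨u', hu', rfl⟩ := Option.map_eq_some_iff.mp h
      obtain ⟨l₁, l₂, rfl, rfl, hl⟩ := ih hu'
      exact ⟨x :: l₁, l₂, rfl, rfl, by simpa [hx] using hl⟩
    · simp [cancel_cons_of_not_adj hxa hx] at h

lemma cancel_append {a : α} {l₁ : List α} (h : ∀ x ∈ l₁, G.Adj x a) (w : List α) :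
    cancel G a (l₁ ++ w) = (cancel G a w).map (l₁ ++ ·) := by
  induction l₁ with
  | nil => simp
  | cons x l₁ ih =>
    simp only [List.mem_cons, forall_eq_or_imp] at h
    rw [List.cons_append, cancel_cons_of_adj h.1, ih h.2, Option.map_map]
    rfl

lemma cancel_append_cons_eq_none {a b : α} (hab : G.Adj a b) {l₁ l₂ : List α}
    (h : cancel G b (l₁ ++ a :: l₂) = none) : cancel G b (l₁ ++ l₂) = none := by
  induction l₁ with
  | nil => simpa [cancel_cons_of_adj hab] using h
  | cons x l₁ ih =>
    have hxb : x ≠ b := by rintro rfl; simp at h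
    by_cases hx : G.Adj x b
    · simp only [List.cons_append, cancel_cons_of_adj hx, Option.map_eq_none_iff] at h ⊢
      exact ih h
    · exact cancel_cons_of_not_adj hxb hx _

lemma cancel_cons_eq_some {a x : α} (hxa : x ≠ a) {t u : List α}
    (h : cancel G a (x :: t) = some u) :
    G.Adj x a ∧ ∃ u', cancel G a t = some u' ∧ u = x :: u' := by
  by_cases hx : G.Adj x a
  · rw [cancel_cons_of_adj hx] at h
    obtain ⟨u', hu', rfl⟩ := Option.map_eq_some_iff.mp h
    exact ⟨hx, u', hu', rfl⟩
  · simp [cancel_cons_of_not_adj hxa hx] at h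

lemma cancel_comm {a b : α} (hab : a ≠ b) {w u v : List α} (ha : cancel G a w = some u)
    (hb : cancel G b w = some v) : ∃ z, cancel G b u = some z ∧ cancel G a v = some z := by
  induction w generalizing u v with
  | nil => simp [cancel] at ha
  | cons x t ih =>
    by_cases hxa : x = a
    · subst hxa
      obtain rfl : t = u := by simpa using ha
      obtain ⟨-, v', hv', rfl⟩ := cancel_cons_eq_some hab hb
      exact ⟨v', hv', by simp⟩
    by_cases hxb : x = b
    · subst hxb
      obtain rfl : t = v := by simpa using hb
      obtain ⟨-, u', hu', rfl⟩ := cancel_cons_eq_some hab.symm ha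
      exact ⟨u', by simp, hu'⟩
    obtain ⟨hxa', u', hu', rfl⟩ := cancel_cons_eq_some hxa ha
    obtain ⟨hxb', v', hv', rfl⟩ := cancel_cons_eq_some hxb hb
    obtain ⟨z, hz₁, hz₂⟩ := ih hu' hv'
    exact ⟨x :: z, by simp [cancel_cons_of_adj hxb', hz₁], by simp [cancel_cons_of_adj hxa', hz₂]⟩

lemma Reduced.of_append {l₁ l₂ : List α} (h : Reduced G (l₁ ++ l₂)) : Reduced G l₂ := by
  induction l₁ with
  | nil => exact h
  | cons x l₁ ih => exact ih h.2

lemma Reduced.of_cancel_eq_some {a : α} {w u : List α} (hw : Reduced G w)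
    (h : cancel G a w = some u) : Reduced G u := by
  induction w generalizing u with
  | nil => simp [cancel] at h
  | cons x t ih =>
    by_cases hxa : x = a
    · subst hxa
      obtain rfl : t = u := by simpa using h
      exact hw.2
    obtain ⟨hx, u', hu', rfl⟩ := cancel_cons_eq_some hxa h
    obtain ⟨l₁, l₂, rfl, rfl, -⟩ := exists_of_cancel_eq_some hu'
    exact ⟨cancel_append_cons_eq_none hx.symm hw.1, ih hw.2 hu'⟩

lemma Reduced.cancel_eq_none_of_cancel_eq_some {a : α} {w u : List α} (hw : Reduced G w)
    (h : cancel G a w = some u) : cancel G a u = none := by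
  obtain ⟨l₁, l₂, rfl, rfl, hl⟩ := exists_of_cancel_eq_some h
  simp [cancel_append hl, (hw.of_append (l₁ := l₁)).1]

lemma SwapStep.rel_cancel (a : α) {w w' : List α} (h : SwapStep G w w') :
    Option.Rel (SwapEquiv G) (cancel G a w) (cancel G a w') := by
  induction h with
  | @swap x y l hxy =>
    by_cases hxa : x = a
    · subst hxa
      simpa [cancel_cons_of_adj hxy.symm] using Option.Rel.some .refl
    by_cases hya : y = a
    · subst hya
      simpa [cancel_cons_of_adj hxy] using Option.Rel.some .refl
    by_cases hx : G.Adj x a <;> by_cases hy : G.Adj y a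
    · simp only [cancel_cons_of_adj hx, cancel_cons_of_adj hy, Option.map_map]
      generalize cancel G a l = o
      cases o with
      | none => exact .none
      | some u => exact .some (.single (.swap u hxy))
    all_goals simp [cancel, hxa, hya, hx, hy]
  | @cons x l l' hs ih =>
    by_cases hxa : x = a
    · subst hxa
      simpa using Option.Rel.some (.single hs)
    by_cases hx : G.Adj x a
    · rw [cancel_cons_of_adj hx, cancel_cons_of_adj hx]
      generalize cancel G a l = o, cancel G a l' = o' at ih
      cases ih with
      | none => exact .none
      | some h => exact .some (h.cons x)
    · simp [cancel_cons_of_not_adj hxa hx]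

lemma act_of_cancel_eq_none {a : α} {w : List α} (h : cancel G a w = none) :
    act G a w = a :: w := by
  simp [act, h]

lemma act_of_cancel_eq_some {a : α} {w u : List α} (h : cancel G a w = some u) :
    act G a w = u := by
  simp [act, h]

lemma Reduced.act {w : List α} (hw : Reduced G w) (a : α) : Reduced G (act G a w) := by
  cases h : cancel G a w with
  | none => rw [act_of_cancel_eq_none h]; exact ⟨h, hw⟩
  | some u => rw [act_of_cancel_eq_some h]; exact hw.of_cancel_eq_some h

lemma SwapEquiv.act (a : α) {w w' : List α} (h : SwapEquiv G w w') :
    SwapEquiv G (act G a w) (act G a w') := by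
  induction h with
  | refl => exact .refl
  | @tail u u' _ hs ih =>
    refine ih.trans ?_
    have hrel := hs.rel_cancel a
    unfold RightAngledCoxeter.act
    generalize cancel G a u = o, cancel G a u' = o' at hrel
    cases hrel with
    | none => exact .single (hs.cons a)
    | some h => exact h

lemma act_act {a : α} {w : List α} (hw : Reduced G w) : SwapEquiv G (act G a (act G a w)) w := by
  cases h : cancel G a w with
  | none =>
    rw [act_of_cancel_eq_none h, act_of_cancel_eq_some (cancel_cons_self a w)]
    exact .refl
  | some u =>
    rw [act_of_cancel_eq_some h, act_of_cancel_eq_none (hw.cancel_eq_none_of_cancel_eq_some h)]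
    obtain ⟨l₁, l₂, rfl, rfl, hl⟩ := exists_of_cancel_eq_some h
    exact swapEquiv_cons_append hl l₂

lemma act_comm_of_cancel_eq_none_of_cancel_eq_some {a b : α} (hab : G.Adj a b) {w u : List α}
    (ha : cancel G a w = none) (hb : cancel G b w = some u) :
    act G a (act G b w) = act G b (act G a w) := by
  obtain ⟨l₁, l₂, rfl, rfl, -⟩ := exists_of_cancel_eq_some hb
  rw [act_of_cancel_eq_some hb, act_of_cancel_eq_none (cancel_append_cons_eq_none hab.symm ha),
    act_of_cancel_eq_none ha, act_of_cancel_eq_some]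
  simp [cancel_cons_of_adj hab, hb]

lemma act_comm {a b : α} (hab : G.Adj a b) (w : List α) :
    SwapEquiv G (act G a (act G b w)) (act G b (act G a w)) := by
  cases ha : cancel G a w with
  | none =>
    cases hb : cancel G b w with
    | none =>
      rw [act_of_cancel_eq_none ha, act_of_cancel_eq_none hb,
        act_of_cancel_eq_none (by simp [cancel_cons_of_adj hab.symm, ha]),
        act_of_cancel_eq_none (by simp [cancel_cons_of_adj hab, hb])]
      exact .single (.swap w hab)
    | some u =>
      rw [act_comm_of_cancel_eq_none_of_cancel_eq_some hab ha hb]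
      exact .refl
  | some u =>
    cases hb : cancel G b w with
    | none =>
      rw [act_comm_of_cancel_eq_none_of_cancel_eq_some hab.symm hb ha]
      exact .refl
    | some v =>
      obtain ⟨z, hz₁, hz₂⟩ := cancel_comm hab.ne ha hb
      rw [act_of_cancel_eq_some ha, act_of_cancel_eq_some hb, act_of_cancel_eq_some hz₁,
        act_of_cancel_eq_some hz₂]
      exact .refl

variable (G)

/-- The generators act on reduced words up to commutation (Tits). -/
def reducedSetoid : Setoid {w : List α // Reduced G w} where
  r w w' := SwapEquiv G w.1 w'.1
  iseqv := ⟨fun _ => .refl, SwapEquiv.symm, Relation.ReflTransGen.trans⟩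

def actPerm (a : α) : Equiv.Perm (Quotient (reducedSetoid G)) :=
  Function.Involutive.toPerm
    (Quotient.map (fun w => ⟨act G a w.1, w.2.act a⟩) fun _ _ h => SwapEquiv.act a h)
    (Quotient.ind fun w => Quotient.sound (act_act w.2))

def normalForm (L : List α) : List α := L.foldr (act G) []

variable {G}

lemma actPerm_mul_self (a : α) : actPerm G a * actPerm G a = 1 :=
  Equiv.ext fun x => Function.Involutive.toPerm_involutive _ x

lemma actPerm_mul_comm {a b : α} (hab : G.Adj a b) :
    actPerm G a * actPerm G b = actPerm G b * actPerm G a :=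
  Equiv.ext <| Quotient.ind fun w => Quotient.sound (act_comm hab w.1)

lemma reduced_nil : Reduced G [] := trivial

lemma reduced_normalForm (L : List α) : Reduced G (normalForm G L) := by
  induction L with
  | nil => trivial
  | cons a L ih => exact ih.act a

lemma reduces_normalForm (L : List α) : Reduces G L (normalForm G L) := by
  induction L with
  | nil => exact .refl
  | cons a L ih =>
    refine (ih.cons a).trans ?_
    change Reduces G (a :: normalForm G L) (act G a (normalForm G L))
    cases h : cancel G a (normalForm G L) with
    | none => rw [act_of_cancel_eq_none h]; exact .refl
    | some u =>
      obtain ⟨l₁, l₂, he, rfl, hl⟩ := exists_of_cancel_eq_some h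
      rw [act_of_cancel_eq_some h, he]
      exact reduces_cons_append hl l₂

end RightAngledCoxeter

open RightAngledCoxeter in
abbrev RightAngledCoxeterGroup {α : Type*} (G : SimpleGraph α) := PresentedGroup (rels G)

namespace RightAngledCoxeterGroup

open RightAngledCoxeter

variable {α : Type*} {G : SimpleGraph α}

section Lift

variable {H : Type*} [Group H] (f : α → H) (hsq : ∀ a, f a * f a = 1)
  (hcomm : ∀ a b, G.Adj a b → f a * f b = f b * f a)

def lift : RightAngledCoxeterGroup G →* H :=
  PresentedGroup.toGroup (f := f) <| by
    rintro r (⟨a, rfl⟩ | ⟨a, b, hab, rfl⟩)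
    · simpa using hsq a
    · simp [hcomm a b hab]

lemma lift_of (a : α) : lift f hsq hcomm (PresentedGroup.of a) = f a :=
  PresentedGroup.toGroup.of _

end Lift

variable [DecidableEq α] [DecidableRel G.Adj]

variable (G) in
def wordAction : RightAngledCoxeterGroup G →* Equiv.Perm (Quotient (reducedSetoid G)) :=
  lift (actPerm G) actPerm_mul_self fun _ _ => actPerm_mul_comm

lemma wordAction_prod (L : List α) :
    wordAction G (L.map PresentedGroup.of).prod ⟦⟨[], reduced_nil⟩⟧ =
      ⟦⟨normalForm G L, reduced_normalForm L⟩⟧ := by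
  induction L with
  | nil => rfl
  | cons a L ih =>
    rw [List.map_cons, List.prod_cons, map_mul, Equiv.Perm.mul_apply, ih, wordAction, lift_of]
    rfl

theorem reduces_nil_of_prod_eq_one {L : List α}
    (h : (L.map (PresentedGroup.of (rels := rels G))).prod = 1) : Reduces G L [] := by
  have hnf : normalForm G L = [] := by
    have := wordAction_prod (G := G) L
    rw [h, map_one] at this
    exact (Quotient.exact this.symm : SwapEquiv G _ _).eq_nil
  simpa [hnf] using reduces_normalForm (G := G) L

end RightAngledCoxeterGroup

namespace PresentedGroup

lemma exists_list_map_of_prod_eq {α : Type*} {rels : Set (FreeGroup α)}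
    (h : ∀ a : α, (of a : PresentedGroup rels) * of a = 1) (g : PresentedGroup rels) :
    ∃ l : List α, (l.map of).prod = g := by
  have hg : g ∈ Subgroup.closure (Set.range of) := by simp
  induction hg using Subgroup.closure_induction with
  | mem _ hx => obtain ⟨a, rfl⟩ := hx; exact ⟨[a], by simp⟩
  | one => exact ⟨[], rfl⟩
  | mul _ _ _ _ hx hy =>
    obtain ⟨l, rfl⟩ := hx
    obtain ⟨l', rfl⟩ := hy
    exact ⟨l ++ l', by simp⟩
  | inv _ _ hx =>
    obtain ⟨l, rfl⟩ := hx
    refine ⟨l.reverse, ?_⟩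
    rw [List.prod_inv_reverse, List.map_reverse, List.map_map]
    refine congrArg (List.prod ∘ List.reverse) (List.map_congr_left fun a _ => ?_)
    exact (inv_eq_of_mul_eq_one_right (h a)).symm

end PresentedGroup

namespace PartialCactusGroup

open PresentedGroup

variable {C : Set (ℕ × ℕ)}

lemma of_mul_self (a : C) : (of a : PartialCactusGroup C) * of a = 1 := by
  have := one_of_mem (rels := cactusRels C) (Or.inl ⟨a, rfl⟩)
  rwa [map_mul] at this

lemma of_mul_comm {a b : C} (h : a.1.2 < b.1.1 ∨ b.1.2 < a.1.1) :
    (of a : PartialCactusGroup C) * of b = of b * of a := by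
  have := one_of_mem (rels := cactusRels C) (Or.inr (Or.inl ⟨a, b, h, rfl⟩))
  rw [map_mul, map_mul, map_mul, map_inv, map_inv] at this
  exact commutatorElement_eq_one_iff_mul_comm.mp this

lemma of_mul_of_mul_of {a b c : C} (hab₁ : a.1.1 ≤ b.1.1) (hab₂ : b.1.2 ≤ a.1.2)
    (hc₁ : c.1.1 = a.1.1 + a.1.2 - b.1.2) (hc₂ : c.1.2 = a.1.1 + a.1.2 - b.1.1) :
    (of a : PartialCactusGroup C) * of b * of a = of c := by
  have := one_of_mem (rels := cactusRels C) (Or.inr (Or.inr ⟨a, b, c, hab₁, hab₂, hc₁, hc₂, rfl⟩))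
  rw [map_mul, map_mul, map_mul, map_inv, map_inv, mul_inv_eq_one] at this
  change of a * of b * (of a)⁻¹ = of c at this
  rwa [inv_eq_of_mul_eq_one_right (of_mul_self a)] at this

section Lift

variable {H : Type*} [Group H] (f : C → H) (hsq : ∀ a, f a * f a = 1)
  (hcomm : ∀ a b : C, a.1.2 < b.1.1 ∨ b.1.2 < a.1.1 → f a * f b = f b * f a)
  (hconj : ∀ a b c : C, a.1.1 ≤ b.1.1 → b.1.2 ≤ a.1.2 → c.1.1 = a.1.1 + a.1.2 - b.1.2 →
    c.1.2 = a.1.1 + a.1.2 - b.1.1 → f a * f b * f a = f c)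

def lift : PartialCactusGroup C →* H :=
  toGroup (f := f) <| by
    rintro r (⟨a, rfl⟩ | ⟨a, b, hd, rfl⟩ | ⟨a, b, c, h₁, h₂, h₃, h₄, rfl⟩)
    · simpa using hsq a
    · simp [hcomm a b hd]
    · simp only [map_mul, map_inv, FreeGroup.lift_apply_of]
      rw [inv_eq_of_mul_eq_one_right (hsq a), hconj a b c h₁ h₂ h₃ h₄, mul_inv_cancel]

lemma lift_of (a : C) : lift f hsq hcomm hconj (of a) = f a :=
  toGroup.of _

end Lift

def inclusion {C' : Set (ℕ × ℕ)} (h : C ⊆ C') : PartialCactusGroup C →* PartialCactusGroup C' :=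
  lift (fun a => of (Set.inclusion h a)) (fun _ => of_mul_self _) (fun _ _ hd => of_mul_comm hd)
    fun _ _ _ h₁ h₂ h₃ h₄ => of_mul_of_mul_of h₁ h₂ h₃ h₄

end PartialCactusGroup

section Intervals

variable {n : ℕ}

lemma wPerm_apply_val (p q : ℕ) (j : Fin n) :
    (wPerm n p q j : ℕ) =
      if 1 ≤ p ∧ p ≤ (j : ℕ) + 1 ∧ (j : ℕ) + 1 ≤ q ∧ q ≤ n then p + q - ((j : ℕ) + 1) - 1
      else j := by
  change (wFun n p q j : ℕ) = _
  unfold wFun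
  split_ifs <;> rfl

lemma wPerm_mul_self (p q : ℕ) : wPerm n p q * wPerm n p q = 1 :=
  Equiv.ext (wFun_involutive n p q)

lemma wPerm_comm {p q m r : ℕ} (h : q < m ∨ r < p) :
    wPerm n p q * wPerm n m r = wPerm n m r * wPerm n p q := by
  ext j
  simp only [Equiv.Perm.mul_apply, wPerm_apply_val]
  split_ifs <;> omega

lemma wPerm_conj {p q m r : ℕ} (hp : 1 ≤ p) (hpm : p ≤ m) (hrq : r ≤ q) (hq : q ≤ n) :
    wPerm n p q * wPerm n m r * wPerm n p q = wPerm n (p + q - r) (p + q - m) := by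
  ext j
  simp only [Equiv.Perm.mul_apply, wPerm_apply_val]
  split_ifs <;> omega

lemma mem_intervalFinset {p q : ℕ} {j : Fin n} :
    j ∈ intervalFinset n p q ↔ p ≤ (j : ℕ) + 1 ∧ (j : ℕ) + 1 ≤ q := by
  simp [intervalFinset]

lemma mem_image_wPerm {p q : ℕ} {s : Finset (Fin n)} {j : Fin n} :
    j ∈ s.image (wPerm n p q) ↔ wPerm n p q j ∈ s := by
  have hw : ∀ j, wPerm n p q (wPerm n p q j) = j := wFun_involutive n p q
  exact ⟨fun h => by obtain ⟨k, hk, rfl⟩ := Finset.mem_image.mp h; rwa [hw],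
    fun h => Finset.mem_image.mpr ⟨_, h, hw j⟩⟩

lemma image_wPerm_intervalFinset_of_disjoint {p q m r : ℕ} (h : q < m ∨ r < p) :
    (intervalFinset n m r).image (wPerm n p q) = intervalFinset n m r := by
  ext j
  simp only [mem_image_wPerm, mem_intervalFinset, wPerm_apply_val]
  split_ifs <;> omega

lemma image_wPerm_intervalFinset_of_le {p q m r : ℕ} (hp : 1 ≤ p) (hpm : p ≤ m) (hrq : r ≤ q)
    (hq : q ≤ n) :
    (intervalFinset n m r).image (wPerm n p q) = intervalFinset n (p + q - r) (p + q - m) := by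
  ext j
  simp only [mem_image_wPerm, mem_intervalFinset, wPerm_apply_val]
  split_ifs <;> omega

lemma image_wPerm_intervalFinset_self {p q : ℕ} (hp : 1 ≤ p) (hq : q ≤ n) :
    (intervalFinset n p q).image (wPerm n p q) = intervalFinset n p q := by
  simpa using image_wPerm_intervalFinset_of_le (m := p) (r := q) hp le_rfl le_rfl hq

lemma disjoint_intervalFinset {p q m r : ℕ} (h : q < m ∨ r < p) :
    Disjoint (intervalFinset n p q) (intervalFinset n m r) :=
  Finset.disjoint_left.mpr fun j hj hj' => by
    rw [mem_intervalFinset] at hj hj'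
    omega

lemma disjoint_intervalFinset_iff {p q m r : ℕ} (hp : 1 ≤ p) (hpq : p ≤ q) (hq : q ≤ n)
    (hmr : m ≤ r) :
    Disjoint (intervalFinset n p q) (intervalFinset n m r) ↔ q < m ∨ r < p := by
  refine ⟨fun h => ?_, disjoint_intervalFinset⟩
  by_contra hc
  have hj : (⟨max p m - 1, by omega⟩ : Fin n) ∈ intervalFinset n p q := by
    rw [mem_intervalFinset, Fin.val_mk]; omega
  have hj' : (⟨max p m - 1, by omega⟩ : Fin n) ∈ intervalFinset n m r := by
    rw [mem_intervalFinset, Fin.val_mk]; omega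
  exact Finset.disjoint_left.mp h hj hj'

lemma intervalFinset_inj {p q m r : ℕ} (hp : 1 ≤ p) (hpq : p ≤ q) (hq : q ≤ n)
    (hm : 1 ≤ m) (hmr : m ≤ r) (hr : r ≤ n) :
    intervalFinset n p q = intervalFinset n m r ↔ p = m ∧ q = r := by
  refine ⟨fun h => ?_, fun ⟨hpm, hqr⟩ => hpm ▸ hqr ▸ rfl⟩
  have e := fun j => Finset.ext_iff.mp h j
  have e₁ := e ⟨p - 1, by omega⟩
  have e₂ := e ⟨q - 1, by omega⟩
  have e₃ := e ⟨m - 1, by omega⟩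
  have e₄ := e ⟨r - 1, by omega⟩
  simp only [mem_intervalFinset] at e₁ e₂ e₃ e₄
  omega

end Intervals

abbrev GaussSemidirect (n i : ℕ) :=
  SemidirectProduct (GaussIGroup n i) (Equiv.Perm (Fin n)) (permAutI n i)

section Eraser

variable {n i : ℕ}

def tau (n i : ℕ) (s : Finset (Fin n)) : GaussIGroup n i :=
  if h : s.card = i then PresentedGroup.of ⟨s, h⟩ else 1

lemma permAutI_tau (σ : Equiv.Perm (Fin n)) (s : Finset (Fin n)) :
    permAutI n i σ (tau n i s) = tau n i (s.image σ) := by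
  have hcard : (s.image σ).card = s.card := Finset.card_image_of_injective _ σ.injective
  unfold tau
  split_ifs with h h' h'
  · exact permHomI_of n i σ _
  · exact absurd (hcard.trans h) h'
  · exact absurd (hcard.symm.trans h') h
  · exact map_one _

lemma tau_mul_self (s : Finset (Fin n)) : tau n i s * tau n i s = 1 := by
  unfold tau
  split_ifs with h
  · have := gaussIRel_one (Or.inl ⟨⟨s, h⟩, rfl⟩)
    rwa [map_mul] at this
  · exact mul_one 1

lemma tau_mul_comm {s t : Finset (Fin n)} (hst : Disjoint s t) :
    tau n i s * tau n i t = tau n i t * tau n i s := by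
  unfold tau
  split_ifs with hs ht
  · have := gaussIRel_one (Or.inr ⟨⟨s, hs⟩, ⟨t, ht⟩, hst, rfl⟩)
    rw [map_mul, map_mul, map_mul, map_inv, map_inv] at this
    exact commutatorElement_eq_one_iff_mul_comm.mp this
  all_goals simp

def tauW (n i p q : ℕ) : GaussSemidirect n i := ⟨tau n i (intervalFinset n p q), wPerm n p q⟩

lemma tauW_mul_self {p q : ℕ} (hp : 1 ≤ p) (hq : q ≤ n) : tauW n i p q * tauW n i p q = 1 := by
  refine SemidirectProduct.ext ?_ ?_
  · rw [SemidirectProduct.mul_left, tauW, permAutI_tau, image_wPerm_intervalFinset_self hp hq,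
      tau_mul_self, SemidirectProduct.one_left]
  · exact wPerm_mul_self p q

lemma tauW_comm {p q m r : ℕ} (h : q < m ∨ r < p) :
    tauW n i p q * tauW n i m r = tauW n i m r * tauW n i p q := by
  refine SemidirectProduct.ext ?_ ?_
  · simp only [SemidirectProduct.mul_left, tauW, permAutI_tau,
      image_wPerm_intervalFinset_of_disjoint h, image_wPerm_intervalFinset_of_disjoint h.symm]
    exact tau_mul_comm (disjoint_intervalFinset h)
  · exact wPerm_comm h

lemma tauW_conj {p q m r : ℕ} (hi : (intervalFinset n p q).card ≠ i) (hp : 1 ≤ p) (hpm : p ≤ m)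
    (hrq : r ≤ q) (hq : q ≤ n) :
    tauW n i p q * tauW n i m r * tauW n i p q = tauW n i (p + q - r) (p + q - m) := by
  have hτ : tau n i (intervalFinset n p q) = 1 := dif_neg hi
  refine SemidirectProduct.ext ?_ ?_
  · simp only [SemidirectProduct.mul_left, SemidirectProduct.mul_right, tauW, hτ, permAutI_tau,
      image_wPerm_intervalFinset_of_le hp hpm hrq hq, map_one, one_mul, mul_one]
  · exact wPerm_conj hp hpm hrq hq

/-- Above width `i` the `D_n^i`-component of `tauW` is `1`, since `tau` vanishes off `i`-sets. -/
def eraserGen (n i : ℕ) (a : cactusSet n) : GaussSemidirect n i :=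
  if a.1.2 - a.1.1 + 1 < i then 1 else tauW n i a.1.1 a.1.2

lemma eraserGen_mul_self (a : cactusSet n) : eraserGen n i a * eraserGen n i a = 1 := by
  unfold eraserGen
  split_ifs
  · exact mul_one 1
  · exact tauW_mul_self a.2.1 a.2.2.2

lemma eraserGen_comm {a b : cactusSet n} (h : a.1.2 < b.1.1 ∨ b.1.2 < a.1.1) :
    eraserGen n i a * eraserGen n i b = eraserGen n i b * eraserGen n i a := by
  unfold eraserGen
  split_ifs <;> simp [tauW_comm h]

lemma eraserGen_conj {a b c : cactusSet n} (hab₁ : a.1.1 ≤ b.1.1) (hab₂ : b.1.2 ≤ a.1.2)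
    (hc₁ : c.1.1 = a.1.1 + a.1.2 - b.1.2) (hc₂ : c.1.2 = a.1.1 + a.1.2 - b.1.1) :
    eraserGen n i a * eraserGen n i b * eraserGen n i a = eraserGen n i c := by
  obtain ⟨⟨p, q⟩, hp, hpq, hq⟩ := a
  obtain ⟨⟨m, r⟩, hm, hmr, hr⟩ := b
  obtain ⟨⟨c₁, c₂⟩, hc⟩ := c
  dsimp only at hab₁ hab₂ hc₁ hc₂
  subst hc₁ hc₂
  unfold eraserGen
  dsimp only
  by_cases ha : q - p + 1 < i
  · rw [if_pos ha, if_pos (by omega), if_pos (by omega), mul_one, mul_one]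
  by_cases hb : r - m + 1 < i
  · rw [if_neg ha, if_pos hb, if_pos (by omega), mul_one, tauW_mul_self hp hq]
  rw [if_neg ha, if_neg hb, if_neg (by omega)]
  by_cases hai : q - p + 1 = i
  · obtain ⟨rfl, rfl⟩ : m = p ∧ r = q := by omega
    rw [tauW_mul_self hp hq, one_mul, Nat.add_sub_cancel, Nat.add_sub_cancel_left]
  · exact tauW_conj (by rw [intervalFinset_card hp hq]; omega) hp hab₁ hab₂ hq

def eraser (n i : ℕ) : CactusGroup n →* GaussSemidirect n i :=
  PartialCactusGroup.lift (eraserGen n i) eraserGen_mul_self (fun _ _ => eraserGen_comm)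
    fun _ _ _ => eraserGen_conj

end Eraser

section Injectivity

open PresentedGroup RightAngledCoxeter

variable {n i : ℕ}

/-- `gaussIRels n i` is literally `RightAngledCoxeter.rels (kneserGraph n i hi)`, so `D_n^i` is the
right-angled Coxeter group of the Kneser graph. -/
def kneserGraph (n i : ℕ) (hi : i ≠ 0) : SimpleGraph (GaussIGen n i) where
  Adj a b := Disjoint a.1 b.1
  symm := ⟨fun _ _ h => h.symm⟩
  loopless := ⟨fun a h => hi <| by rw [← a.2, disjoint_self.mp h]; rfl⟩

instance (hi : i ≠ 0) : DecidableRel (kneserGraph n i hi).Adj :=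
  fun a b => inferInstanceAs (Decidable (Disjoint a.1 b.1))

def sliceGen (a : sliceSet n i i) : GaussIGen n i :=
  ⟨intervalFinset n a.1.1 a.1.2, by
    obtain ⟨⟨hp, hpq, hq⟩, h₁, h₂⟩ := a.2
    rw [intervalFinset_card hp hq]
    omega⟩

def twist : Equiv.Perm (Fin n) → List (sliceSet n i i) → List (GaussIGen n i)
  | _, [] => []
  | σ, a :: v => permGenI n i σ (sliceGen a) :: twist (σ * wPerm n a.1.1 a.1.2) v

def restrictedEraser (n i : ℕ) : SliceCactusGroup n i i →* GaussSemidirect n i :=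
  (eraser n i).comp (PartialCactusGroup.inclusion fun _ h => h.1)

lemma restrictedEraser_of (a : sliceSet n i i) :
    restrictedEraser n i (of a) = ⟨of (sliceGen a), wPerm n a.1.1 a.1.2⟩ := by
  have hτ : tau n i (intervalFinset n a.1.1 a.1.2) = of (sliceGen a) := dif_pos (sliceGen a).2
  simp only [restrictedEraser, MonoidHom.comp_apply, PartialCactusGroup.inclusion, eraser,
    PartialCactusGroup.lift_of, eraserGen, if_neg (Nat.not_lt.mpr a.2.2.1)]
  rw [tauW, hτ]

lemma permAutI_restrictedEraser_prod (σ : Equiv.Perm (Fin n)) (v : List (sliceSet n i i)) :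
    permAutI n i σ (restrictedEraser n i (v.map of).prod).left = ((twist σ v).map of).prod := by
  induction v generalizing σ with
  | nil => simp [twist]
  | cons a v ih =>
    rw [List.map_cons, List.prod_cons, map_mul, SemidirectProduct.mul_left, restrictedEraser_of,
      map_mul, ← MulAut.mul_apply, ← map_mul, ih, twist, List.map_cons, List.prod_cons]
    rfl

lemma permGenI_mul (σ ρ : Equiv.Perm (Fin n)) (a : GaussIGen n i) :
    permGenI n i σ (permGenI n i ρ a) = permGenI n i (σ * ρ) a :=
  Subtype.ext Finset.image_image

lemma permGenI_injective (σ : Equiv.Perm (Fin n)) : Function.Injective (permGenI n i σ) :=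
  fun _ _ h => Subtype.ext <| Finset.image_injective σ.injective (congrArg Subtype.val h)

lemma sliceSet_bounds (a : sliceSet n i i) : 1 ≤ a.1.1 ∧ a.1.1 ≤ a.1.2 ∧ a.1.2 ≤ n :=
  ⟨a.2.1.1, a.2.1.2.1.le, a.2.1.2.2⟩

lemma permGenI_wPerm_sliceGen_of_disjoint {a b : sliceSet n i i}
    (h : a.1.2 < b.1.1 ∨ b.1.2 < a.1.1) :
    permGenI n i (wPerm n a.1.1 a.1.2) (sliceGen b) = sliceGen b :=
  Subtype.ext (image_wPerm_intervalFinset_of_disjoint h)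

lemma exists_twist_eq_of_swap {σ : Equiv.Perm (Fin n)} {v : List (sliceSet n i i)}
    {x y : GaussIGen n i} {l : List (GaussIGen n i)} (hv : twist σ v = x :: y :: l)
    (hxy : Disjoint x.1 y.1) :
    ∃ v', twist σ v' = y :: x :: l ∧
      ((v'.map of).prod : SliceCactusGroup n i i) = (v.map of).prod := by
  obtain ⟨a, b, v, rfl⟩ : ∃ a b v₀, v = a :: b :: v₀ := by
    match v, hv with
    | a :: b :: v₀, _ => exact ⟨a, b, v₀, rfl⟩
  simp only [twist, List.cons.injEq] at hv
  obtain ⟨rfl, rfl, rfl⟩ := hv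
  obtain ⟨ha₁, ha₂, ha₃⟩ := sliceSet_bounds a
  obtain ⟨hb₁, hb₂, hb₃⟩ := sliceSet_bounds b
  -- `w_a` preserves `I_a`, so `I_a ∩ w_a(I_b) = w_a(I_a ∩ I_b)`.
  have hab : a.1.2 < b.1.1 ∨ b.1.2 < a.1.1 := by
    rw [← permGenI_mul] at hxy
    have := (Finset.disjoint_image σ.injective).mp hxy
    change Disjoint (intervalFinset n a.1.1 a.1.2)
      ((intervalFinset n b.1.1 b.1.2).image (wPerm n a.1.1 a.1.2)) at this
    rw [← image_wPerm_intervalFinset_self ha₁ ha₃, Finset.disjoint_image (wPerm n _ _).injective,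
      disjoint_intervalFinset_iff ha₁ ha₂ ha₃ hb₂] at this
    exact this
  refine ⟨b :: a :: v, ?_, ?_⟩
  · simp only [twist, ← permGenI_mul, permGenI_wPerm_sliceGen_of_disjoint hab,
      permGenI_wPerm_sliceGen_of_disjoint hab.symm, mul_assoc, wPerm_comm hab]
  · simp only [List.map_cons, List.prod_cons, ← mul_assoc]
    rw [PartialCactusGroup.of_mul_comm hab]

lemma sliceGen_injective : Function.Injective (sliceGen (n := n) (i := i)) := by
  intro a b h
  obtain ⟨ha₁, ha₂, ha₃⟩ := sliceSet_bounds a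
  obtain ⟨hb₁, hb₂, hb₃⟩ := sliceSet_bounds b
  obtain ⟨h₁, h₂⟩ :=
    (intervalFinset_inj ha₁ ha₂ ha₃ hb₁ hb₂ hb₃).mp (congrArg Subtype.val h)
  exact Subtype.ext (Prod.ext h₁ h₂)

lemma permGenI_wPerm_sliceGen_self (a : sliceSet n i i) :
    permGenI n i (wPerm n a.1.1 a.1.2) (sliceGen a) = sliceGen a :=
  Subtype.ext (image_wPerm_intervalFinset_self (sliceSet_bounds a).1 (sliceSet_bounds a).2.2)

lemma exists_twist_eq_of_cancel {σ : Equiv.Perm (Fin n)} {v : List (sliceSet n i i)}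
    {x : GaussIGen n i} {l : List (GaussIGen n i)} (hv : twist σ v = x :: x :: l) :
    ∃ v', twist σ v' = l ∧ ((v'.map of).prod : SliceCactusGroup n i i) = (v.map of).prod := by
  obtain ⟨a, b, v, rfl⟩ : ∃ a b v₀, v = a :: b :: v₀ := by
    match v, hv with
    | a :: b :: v₀, _ => exact ⟨a, b, v₀, rfl⟩
  simp only [twist, List.cons.injEq] at hv
  obtain ⟨hx, hx', rfl⟩ := hv
  have hab : a = b := by
    rw [← hx', ← permGenI_mul] at hx
    have := congrArg (permGenI n i (wPerm n a.1.1 a.1.2)) (permGenI_injective σ hx)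
    rw [permGenI_wPerm_sliceGen_self, permGenI_mul, wPerm_mul_self] at this
    exact sliceGen_injective (this.trans (Subtype.ext (Finset.image_id)))
  subst hab
  refine ⟨v, ?_, ?_⟩
  · rw [mul_assoc, wPerm_mul_self, mul_one]
  · rw [List.map_cons, List.map_cons, List.prod_cons, List.prod_cons, ← mul_assoc,
      PartialCactusGroup.of_mul_self, one_mul]

lemma exists_twist_eq_of_step (hi : i ≠ 0) {L L' : List (GaussIGen n i)}
    (h : Step (kneserGraph n i hi) L L') {σ : Equiv.Perm (Fin n)} {v : List (sliceSet n i i)}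
    (hv : twist σ v = L) :
    ∃ v', twist σ v' = L' ∧ ((v'.map of).prod : SliceCactusGroup n i i) = (v.map of).prod := by
  induction h generalizing σ v with
  | swap l hxy => exact exists_twist_eq_of_swap hv hxy
  | cancel x l => exact exists_twist_eq_of_cancel hv
  | cons x _ ih =>
    obtain ⟨a, v, rfl⟩ : ∃ a v₀, v = a :: v₀ := by
      match v, hv with
      | a :: v₀, _ => exact ⟨a, v₀, rfl⟩
    simp only [twist, List.cons.injEq] at hv
    obtain ⟨v', hv', hprod⟩ := ih hv.2
    exact ⟨a :: v', by rw [twist, hv', hv.1], by simp only [List.map_cons, List.prod_cons, hprod]⟩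

lemma exists_twist_eq_of_reduces (hi : i ≠ 0) {L L' : List (GaussIGen n i)}
    (h : Reduces (kneserGraph n i hi) L L') {σ : Equiv.Perm (Fin n)} {v : List (sliceSet n i i)}
    (hv : twist σ v = L) :
    ∃ v', twist σ v' = L' ∧ ((v'.map of).prod : SliceCactusGroup n i i) = (v.map of).prod := by
  induction h with
  | refl => exact ⟨v, hv, rfl⟩
  | tail _ hs ih =>
    obtain ⟨v₁, hv₁, hprod₁⟩ := ih
    obtain ⟨v₂, hv₂, hprod₂⟩ := exists_twist_eq_of_step hi hs hv₁
    exact ⟨v₂, hv₂, hprod₂.trans hprod₁⟩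

theorem restrictedEraser_injective (hi : i ≠ 0) : Function.Injective (restrictedEraser n i) := by
  rw [injective_iff_map_eq_one]
  intro g hg
  obtain ⟨v, rfl⟩ := exists_list_map_of_prod_eq PartialCactusGroup.of_mul_self g
  have hword : (((twist 1 v).map of).prod : GaussIGroup n i) = 1 := by
    rw [← permAutI_restrictedEraser_prod, hg, SemidirectProduct.one_left, map_one]
  obtain ⟨v', hv', hprod⟩ := exists_twist_eq_of_reduces hi
    (RightAngledCoxeterGroup.reduces_nil_of_prod_eq_one (G := kneserGraph n i hi) hword) rfl
  obtain rfl : v' = [] := by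
    match v', hv' with
    | [], _ => rfl
  exact hprod.symm

end Injectivity

/-- For every `2 ≤ i ≤ n`: (a) there is a well-defined eraser homomorphism
`ε_i : J_n → D_n^i ⋊ S_n` sending `s_{p,q}` to `(1,1)`, `(τ_{[p,q]}, w_{p,q})` or
`(1, w_{p,q})` according as `q-p+1 < i`, `= i` or `> i`; (b) the homomorphism
`J_n^{i,i} → D_n^i ⋊ S_n`, `s_{p,q} ↦ (τ_{[p,q]}, w_{p,q})`, is injective. -/
theorem eraser_cocycle (n i : ℕ) (h2 : 2 ≤ i) :
    (∃ ε : CactusGroup n →*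
        SemidirectProduct (GaussIGroup n i) (Equiv.Perm (Fin n)) (permAutI n i),
      ∀ (p q : ℕ) (h : (p, q) ∈ cactusSet n),
        ε (PresentedGroup.of ⟨(p, q), h⟩) =
          if q - p + 1 < i then 1
          else if h' : q - p + 1 = i then
            ⟨PresentedGroup.of ⟨intervalFinset n p q, by
              have hlt := h.2.1
              rw [intervalFinset_card h.1 h.2.2]
              omega⟩, wPerm n p q⟩
          else ⟨1, wPerm n p q⟩) ∧
    (∃ ψ : SliceCactusGroup n i i →*
        SemidirectProduct (GaussIGroup n i) (Equiv.Perm (Fin n)) (permAutI n i),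
      (∀ (p q : ℕ) (h : (p, q) ∈ sliceSet n i i),
        ψ (PresentedGroup.of ⟨(p, q), h⟩) =
          ⟨PresentedGroup.of ⟨intervalFinset n p q, by
            have hlt := h.1.2.1
            have hle := h.2.1
            have hge := h.2.2
            rw [intervalFinset_card h.1.1 h.1.2.2]
            omega⟩, wPerm n p q⟩) ∧
      Function.Injective ψ) := by
  refine ⟨⟨eraser n i, fun p q h => ?_⟩,
    ⟨restrictedEraser n i, fun p q h => restrictedEraser_of _,
      restrictedEraser_injective (by omega)⟩⟩
  have hcard : (intervalFinset n p q).card = q - p + 1 := by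
    rw [intervalFinset_card h.1 h.2.2]
    exact Nat.sub_add_comm h.2.1.le
  rw [eraser, PartialCactusGroup.lift_of, eraserGen]
  dsimp only
  split_ifs with hlt heq
  · rfl
  · exact SemidirectProduct.ext (dif_pos (hcard.trans heq)) rfl
  · exact SemidirectProduct.ext (dif_neg (hcard.trans_ne heq)) rfl
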